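/- For any level-L quadrants Q^start ≤ Q^end, the set Y = ⋃_{Q=Q^start}^{Q^end} Ω(Q) ⊆ ℝ^d either has star-shaped interior, or there exists c with Q^start ≤ c < Q^end such that Y = Y₁ ∪ Y₂ where Y₁ = ⋃_{Q=Q^start}^{c} Ω(Q) and Y₂ = ⋃_{Q=c+1}^{Q^end} Ω(Q) both have star-shaped interiors. -/

import Mathlib

/-- The `r`-th coordinate (1 ≤ r ≤ d) of a level-`L` quadrant `Q` in dimension `d`. -/
def mortonCoord (d L r Q : ℕ) : ℕ :=
  ∑ ℓ ∈ Finset.range L, (Q / 2 ^ (ℓ * d + (r - 1)) % 2) * 2 ^ ℓ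

/-- Two level-`L` quadrants are face-neighbors: they differ by exactly one in exactly
one coordinate and agree in all other coordinates. -/
def MortonFaceNbr (d L Q Q' : ℕ) : Prop :=
  Q ≠ Q' ∧ ∃ r, 1 ≤ r ∧ r ≤ d ∧
    ((mortonCoord d L r Q : ℤ) - (mortonCoord d L r Q' : ℤ)).natAbs = 1 ∧
    ∀ s, 1 ≤ s → s ≤ d → s ≠ r → mortonCoord d L s Q = mortonCoord d L s Q'

/-- A set of level-`L` quadrants is face-connected: the graph on `S` whose edges join
face-neighbors is connected. -/
def MortonFaceConnected (d L : ℕ) (S : Set ℕ) : Prop :=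
  ∀ Q ∈ S, ∀ Q' ∈ S,
    Relation.ReflTransGen (fun a b => a ∈ S ∧ b ∈ S ∧ MortonFaceNbr d L a b) Q Q'

/-- `S` has at most `n` face-connected components: it can be written as a union of `n`
face-connected subsets. -/
def MortonCompBound (d L : ℕ) (S : Set ℕ) (n : ℕ) : Prop :=
  ∃ f : Fin n → Set ℕ, S = ⋃ i, f i ∧ ∀ i, MortonFaceConnected d L (f i)

/-- The closed box `Ω(Q) = Π_r [2^{-L} Q_r, 2^{-L}(Q_r + 1)] ⊆ ℝ^d` occupied by the
level-`L` quadrant `Q`. -/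
def mortonOmega (d L Q : ℕ) : Set (Fin d → ℝ) :=
  {x | ∀ r : Fin d,
    (mortonCoord d L ((r : ℕ) + 1) Q : ℝ) / 2 ^ L ≤ x r ∧
    x r ≤ ((mortonCoord d L ((r : ℕ) + 1) Q : ℝ) + 1) / 2 ^ L}

/-- `A ⊆ ℝ^d` is star-shaped with respect to `p`. -/
def StarShapedWrt {d : ℕ} (A : Set (Fin d → ℝ)) (p : Fin d → ℝ) : Prop :=
  p ∈ A ∧ ∀ x ∈ A, segment ℝ p x ⊆ A

/-- `A ⊆ ℝ^d` is star-shaped with respect to some point of `A`. -/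
def StarShaped {d : ℕ} (A : Set (Fin d → ℝ)) : Prop :=
  ∃ p, StarShapedWrt A p


/-!
Choose `k` with `Qstart / 2^k + 1 = Qend / 2^k`: the range straddles the boundary `c + 1` between
two consecutive aligned blocks of `2^k` quadrants, `[Qstart, c]` being a tail of the first and
`[c + 1, Qend]` a head of the second. Inside an aligned block the binary digits of the first
quadrant are among those of every member, whose digits are among those of the last quadrant, so
coordinatewise the first quadrant is below and the last one above every member. The Morton index
is monotone in the coordinates, hence every quadrant whose coordinates lie between those of an
extreme quadrant `C` and of a member `Q` belongs to the range as well. A segment from the centre of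
`Ω(C)` to a point of `Ω(Q)` only meets such quadrants, so the union is star-shaped with respect to
that centre, which is an interior point; then so is its interior.
-/

open Set

lemma Nat.testBit_sum_two_pow (s : Finset ℕ) (i : ℕ) :
    (∑ j ∈ s, 2 ^ j).testBit i = decide (i ∈ s) := by
  conv_rhs => rw [← Finset.toFinset_bitIndices_sum_two_pow s]
  simp only [List.mem_toFinset, Nat.mem_bitIndices, Bool.decide_eq_true]

lemma Nat.exists_testBit_of_lt {n m : ℕ} (h : n < m) :
    ∃ i, n.testBit i = false ∧ m.testBit i = true ∧
      ∀ j, i < j → n.testBit j = m.testBit j := by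
  obtain ⟨i, hi, hgt⟩ := Nat.exists_most_significant_bit (Nat.xor_ne_zero_iff.mpr h.ne)
  have hne : n.testBit i ≠ m.testBit i := by simpa [Nat.testBit_xor] using hi
  have hagree : ∀ j, i < j → n.testBit j = m.testBit j := fun j hj => by
    simpa [Nat.testBit_xor] using hgt j hj
  have hm : m.testBit i = true := by
    by_contra hm
    rw [Bool.not_eq_true] at hm
    have hn : n.testBit i = true := by simpa [hm] using hne
    exact (Nat.lt_of_testBit i hm hn fun j hj => (hagree j hj).symm).not_gt h
  exact ⟨i, by simpa [hm] using hne, hm, hagree⟩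

lemma Nat.exists_div_two_pow_add_one_eq {a b : ℕ} (h : a < b) :
    ∃ k, a / 2 ^ k + 1 = b / 2 ^ k := by
  induction b using Nat.strong_induction_on generalizing a with
  | _ b ih =>
    rcases (Nat.div_le_div_right (c := 2) h.le).lt_or_eq with hlt | heq
    · obtain ⟨k, hk⟩ := ih (b / 2) (by omega) hlt
      exact ⟨k + 1, by rwa [pow_succ', ← Nat.div_div_eq_div_mul, ← Nat.div_div_eq_div_mul]⟩
    · exact ⟨0, by rw [pow_zero, Nat.div_one, Nat.div_one]; omega⟩

lemma exists_nat_mem_uIcc_of_mem_uIcc {a b : ℕ} {s t u h : ℝ} (hh : 0 < h)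
    (hs : s ∈ Icc (a / h) ((a + 1) / h)) (ht : t ∈ Icc (b / h) ((b + 1) / h))
    (hu : u ∈ uIcc s t) : ∃ k ∈ uIcc a b, u ∈ Icc (k / h) ((k + 1) / h) := by
  have hlo : ((a ⊓ b : ℕ) : ℝ) ≤ u * h := by
    rw [← div_le_iff₀ hh]
    refine le_trans (le_inf ?_ ?_) hu.1
    · exact le_trans (by gcongr; exact inf_le_left) hs.1
    · exact le_trans (by gcongr; exact inf_le_right) ht.1
  have hhi : u * h ≤ ((a ⊔ b : ℕ) : ℝ) + 1 := by
    rw [← le_div_iff₀ hh]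
    exact hu.2.trans <| sup_le (hs.2.trans (by gcongr; exact le_sup_left))
      (ht.2.trans (by gcongr; exact le_sup_right))
  have hu0 : 0 ≤ u * h := (Nat.cast_nonneg _).trans hlo
  refine ⟨min (a ⊔ b) ⌊u * h⌋₊, ⟨le_min inf_le_sup (Nat.le_floor hlo), min_le_left _ _⟩,
    ?_, ?_⟩
  · rw [div_le_iff₀ hh]
    exact (Nat.cast_le.mpr (min_le_right _ _)).trans (Nat.floor_le hu0)
  · rw [le_div_iff₀ hh]
    rcases le_total (a ⊔ b) ⌊u * h⌋₊ with hm | hm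
    · simpa [min_eq_left hm] using hhi
    · rw [min_eq_right hm]
      exact (Nat.lt_floor_add_one _).le

lemma StarConvex.interior {E : Type*} [AddCommGroup E] [Module ℝ E] [TopologicalSpace E]
    [ContinuousConstSMul ℝ E] [IsTopologicalAddGroup E] {p : E} {A : Set E}
    (hA : StarConvex ℝ p A) (hp : p ∈ interior A) : StarConvex ℝ p (interior A) := by
  intro x hx a b ha hb hab
  obtain rfl | hb := hb.eq_or_lt
  · simpa [show a = 1 by linarith] using hp
  have hhom (z : E) : AffineMap.homothety p b z = a • p + b • z := by
    rw [AffineMap.homothety_eq_lineMap, AffineMap.lineMap_apply_module, ← hab,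
      add_sub_cancel_right]
  have hsub : AffineMap.homothety p b '' A ⊆ A := by
    rintro _ ⟨z, hz, rfl⟩
    exact hhom z ▸ hA hz ha hb.le hab
  rw [← hhom]
  exact interior_mono hsub
    ((AffineMap.homothety_isOpenMap p b hb.ne').image_interior_subset A (mem_image_of_mem _ hx))

namespace Morton

variable {d L : ℕ}

def coord (d L Q : ℕ) (r : Fin d) : ℕ := mortonCoord d L (r + 1) Q

lemma coord_eq_sum (Q : ℕ) (r : Fin d) :
    coord d L Q r =
      ∑ ℓ ∈ (Finset.range L).filter (fun ℓ => Q.testBit (ℓ * d + r)), 2 ^ ℓ := by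
  rw [Finset.sum_filter, coord, mortonCoord]
  refine Finset.sum_congr rfl fun ℓ _ => ?_
  rw [Nat.add_sub_cancel, Nat.testBit_eq_decide_div_mod_eq]
  rcases Nat.mod_two_eq_zero_or_one (Q / 2 ^ (ℓ * d + r)) with h | h <;> simp [h]

lemma testBit_coord (Q : ℕ) (r : Fin d) (ℓ : ℕ) :
    (coord d L Q r).testBit ℓ = (decide (ℓ < L) && Q.testBit (ℓ * d + r)) := by
  simp [coord_eq_sum, Nat.testBit_sum_two_pow]

lemma coord_lt (Q : ℕ) (r : Fin d) : coord d L Q r < 2 ^ L :=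
  Nat.lt_pow_two_of_testBit _ fun ℓ hℓ => by simp [testBit_coord, hℓ.not_gt]

lemma coord_le_coord_of_testBit {Q Q' : ℕ} (h : ∀ i, Q.testBit i → Q'.testBit i) (r : Fin d) :
    coord d L Q r ≤ coord d L Q' r :=
  Nat.le_of_testBit fun ℓ => by simpa [testBit_coord] using fun hℓ hQ => ⟨hℓ, h _ hQ⟩

/-- The most significant binary digit `i` in which `Q' < Q` differ is digit `i / d` of the
coordinate `i % d`, and the digits of that coordinate above it agree. -/
lemma le_of_coord_le {Q Q' : ℕ} (hQ : Q < 2 ^ (d * L))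
    (h : ∀ r, coord d L Q r ≤ coord d L Q' r) : Q ≤ Q' := by
  by_contra! hlt
  obtain ⟨i, hQ'i, hQi, hi⟩ := Nat.exists_testBit_of_lt hlt
  have hiL : i < d * L :=
    (Nat.pow_lt_pow_iff_right (by norm_num)).mp ((Nat.ge_two_pow_of_testBit hQi).trans_lt hQ)
  have hd : 0 < d := Nat.pos_of_ne_zero (by rintro rfl; simp at hiL)
  set r : Fin d := ⟨i % d, Nat.mod_lt i hd⟩
  have hℓ : i / d < L := Nat.div_lt_of_lt_mul hiL
  have hri : i / d * d + r = i := by simp [r, Nat.div_add_mod']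
  refine (h r).not_gt (Nat.lt_of_testBit (i / d) ?_ ?_ fun j hj => ?_)
  · simp [testBit_coord, hℓ, hri, hQ'i]
  · simp [testBit_coord, hℓ, hri, hQi]
  · have hij : i < j * d := Nat.lt_mul_of_div_lt hj hd
    rw [testBit_coord, testBit_coord, hi _ (by omega)]

/-- The coordinate map is injective on `[0, 2^(dL))`, whose size is that of its target. -/
lemma exists_coord_eq (c : Fin d → ℕ) (hc : ∀ r, c r < 2 ^ L) :
    ∃ Q < 2 ^ (d * L), coord d L Q = c := by
  let f : Fin (2 ^ (d * L)) → Fin d → Fin (2 ^ L) :=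
    fun Q r => ⟨coord d L Q r, coord_lt _ _⟩
  have hf : f.Injective := fun Q Q' h => by
    have hcoord : ∀ r, coord d L Q r = coord d L Q' r := fun r => congrArg Fin.val (congrFun h r)
    exact Fin.ext <| le_antisymm (le_of_coord_le Q.2 fun r => (hcoord r).le)
      (le_of_coord_le Q'.2 fun r => (hcoord r).ge)
  have hcard : Fintype.card (Fin (2 ^ (d * L))) = Fintype.card (Fin d → Fin (2 ^ L)) := by
    simp [← pow_mul, mul_comm]
  obtain ⟨Q, hQ⟩ := ((Fintype.bijective_iff_injective_and_card f).mpr ⟨hf, hcard⟩).2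
    fun r => ⟨c r, hc r⟩
  exact ⟨Q, Q.2, funext fun r => congrArg Fin.val (congrFun hQ r)⟩

lemma testBit_of_div_two_pow_eq {Q m k i : ℕ} (h : Q / 2 ^ k = m) (hi : k ≤ i) :
    Q.testBit i = m.testBit (i - k) := by
  rw [← h, Nat.testBit_div_two_pow, Nat.sub_add_cancel hi]

lemma coord_two_pow_mul_le {Q m k : ℕ} (h : Q / 2 ^ k = m) (r : Fin d) :
    coord d L (2 ^ k * m) r ≤ coord d L Q r := by
  refine coord_le_coord_of_testBit (fun i => ?_) r
  rw [Nat.testBit_two_pow_mul, Bool.and_eq_true, decide_eq_true_iff]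
  rintro ⟨hki, hm⟩
  rwa [testBit_of_div_two_pow_eq h hki]

lemma coord_le_two_pow_mul_add {Q m k : ℕ} (h : Q / 2 ^ k = m) (r : Fin d) :
    coord d L Q r ≤ coord d L (2 ^ k * m + (2 ^ k - 1)) r := by
  refine coord_le_coord_of_testBit (fun i => ?_) r
  rw [Nat.testBit_two_pow_mul_add _ (Nat.sub_lt (Nat.two_pow_pos k) one_pos)]
  split_ifs with hik
  · simp [hik]
  · rw [testBit_of_div_two_pow_eq h (not_lt.mp hik)]
    exact id

lemma mortonOmega_eq_pi (Q : ℕ) :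
    mortonOmega d L Q =
      univ.pi fun r => Icc ((coord d L Q r : ℝ) / 2 ^ L) ((coord d L Q r + 1) / 2 ^ L) := by
  ext x
  simp only [mortonOmega, coord, mem_ofPred_eq, mem_pi, mem_univ, true_implies, mem_Icc]

noncomputable def center (d L Q : ℕ) : Fin d → ℝ := fun r => (coord d L Q r + 1 / 2) / 2 ^ L

lemma center_mem_interior (Q : ℕ) : center d L Q ∈ interior (mortonOmega d L Q) := by
  rw [mortonOmega_eq_pi, interior_pi_set finite_univ]
  simp only [mem_pi, mem_univ, true_implies, interior_Icc, mem_Ioo, center]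
  exact fun r => ⟨by gcongr; norm_num, by gcongr; norm_num⟩

lemma segment_center_subset {C Q : ℕ} {x : Fin d → ℝ} (hx : x ∈ mortonOmega d L Q) :
    segment ℝ (center d L C) x ⊆ ⋃ Q' ∈ {Q' | Q' < 2 ^ (d * L) ∧
      ∀ r, coord d L Q' r ∈ uIcc (coord d L C r) (coord d L Q r)}, mortonOmega d L Q' := by
  rintro y ⟨a, b, ha, hb, hab, rfl⟩
  have hcoord (r : Fin d) : (a • center d L C + b • x) r ∈ uIcc (center d L C r) (x r) :=
    segment_subset_uIcc _ _ ⟨a, b, ha, hb, hab, by simp⟩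
  have hC := center_mem_interior (d := d) (L := L) C
  rw [mortonOmega_eq_pi, interior_pi_set finite_univ] at hC
  rw [mortonOmega_eq_pi] at hx
  choose k hk hyk using fun r => exists_nat_mem_uIcc_of_mem_uIcc (by positivity)
    (Ioo_subset_Icc_self (by simpa using hC r (mem_univ r))) (hx r (mem_univ r)) (hcoord r)
  obtain ⟨Q', hQ', rfl⟩ := exists_coord_eq k fun r =>
    (hk r).2.trans_lt (max_lt (coord_lt _ _) (coord_lt _ _))
  exact mem_biUnion ⟨hQ', hk⟩ (by rw [mortonOmega_eq_pi]; exact fun r _ => hyk r)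

lemma starShapedWrt_interior_biUnion {S : Set ℕ} {C : ℕ} (hC : C ∈ S)
    (hS : ∀ Q ∈ S, ∀ Q' < 2 ^ (d * L),
      (∀ r, coord d L Q' r ∈ uIcc (coord d L C r) (coord d L Q r)) → Q' ∈ S) :
    StarShapedWrt (interior (⋃ Q ∈ S, mortonOmega d L Q)) (center d L C) := by
  have hCint : center d L C ∈ interior (⋃ Q ∈ S, mortonOmega d L Q) :=
    interior_mono (subset_biUnion_of_mem hC) (center_mem_interior C)
  have hstar : StarConvex ℝ (center d L C) (⋃ Q ∈ S, mortonOmega d L Q) := by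
    refine starConvex_iff_segment_subset.mpr fun x hx => ?_
    obtain ⟨Q, hQ, hxQ⟩ := mem_iUnion₂.mp hx
    exact (segment_center_subset hxQ).trans <|
      biUnion_subset_biUnion_left fun Q' ⟨hQ', hbetween⟩ => hS Q hQ Q' hQ' hbetween
  exact ⟨hCint, fun x hx => (hstar.interior hCint).segment_subset hx⟩

lemma starShapedWrt_interior_Icc_of_coord_le {a b : ℕ} (hab : a ≤ b) (hb : b < 2 ^ (d * L))
    (h : ∀ Q ∈ Icc a b, ∀ r, coord d L a r ≤ coord d L Q r) :
    StarShapedWrt (interior (⋃ Q ∈ Icc a b, mortonOmega d L Q)) (center d L a) := by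
  refine starShapedWrt_interior_biUnion ⟨le_rfl, hab⟩ fun Q hQ Q' hQ' hbetween => ⟨?_, ?_⟩
  · exact le_of_coord_le (hab.trans_lt hb) fun r => (uIcc_of_le (h Q hQ r) ▸ hbetween r).1
  · exact (le_of_coord_le hQ' fun r => (uIcc_of_le (h Q hQ r) ▸ hbetween r).2).trans hQ.2

lemma starShapedWrt_interior_Icc_of_le_coord {a b : ℕ} (hab : a ≤ b) (hb : b < 2 ^ (d * L))
    (h : ∀ Q ∈ Icc a b, ∀ r, coord d L Q r ≤ coord d L b r) :
    StarShapedWrt (interior (⋃ Q ∈ Icc a b, mortonOmega d L Q)) (center d L b) := by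
  refine starShapedWrt_interior_biUnion ⟨hab, le_rfl⟩ fun Q hQ Q' hQ' hbetween => ⟨?_, ?_⟩
  · exact hQ.1.trans <| le_of_coord_le (hQ.2.trans_lt hb) fun r =>
      (uIcc_of_ge (h Q hQ r) ▸ hbetween r).1
  · exact le_of_coord_le hQ' fun r => (uIcc_of_ge (h Q hQ r) ▸ hbetween r).2

lemma starShapedWrt_interior_Icc_two_pow_mul {k m b : ℕ} (hb : b / 2 ^ k = m)
    (hbL : b < 2 ^ (d * L)) :
    StarShapedWrt (interior (⋃ Q ∈ Icc (2 ^ k * m) b, mortonOmega d L Q))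
      (center d L (2 ^ k * m)) := by
  refine starShapedWrt_interior_Icc_of_coord_le (hb ▸ Nat.mul_div_le b (2 ^ k)) hbL
    fun Q hQ => coord_two_pow_mul_le (le_antisymm (hb ▸ Nat.div_le_div_right hQ.2) ?_)
  exact (Nat.le_div_iff_mul_le (Nat.two_pow_pos k)).mpr (by rw [mul_comm]; exact hQ.1)

lemma starShapedWrt_interior_Icc_two_pow_mul_add {k m a : ℕ} (ha : a / 2 ^ k = m)
    (hL : 2 ^ k * m + (2 ^ k - 1) < 2 ^ (d * L)) :
    StarShapedWrt (interior (⋃ Q ∈ Icc a (2 ^ k * m + (2 ^ k - 1)), mortonOmega d L Q))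
      (center d L (2 ^ k * m + (2 ^ k - 1))) := by
  have hpos := Nat.two_pow_pos k
  have ha' : a < 2 ^ k * m + 2 ^ k := mul_add_one (2 ^ k) m ▸ ha ▸ Nat.lt_mul_div_succ a hpos
  refine starShapedWrt_interior_Icc_of_le_coord (by omega) hL
    fun Q hQ => coord_le_two_pow_mul_add (le_antisymm ?_ (ha ▸ Nat.div_le_div_right hQ.1))
  refine Nat.lt_succ_iff.mp <| (Nat.div_lt_iff_lt_mul hpos).mpr ?_
  rw [Nat.succ_mul, mul_comm]
  exact hQ.2.trans_lt (by omega)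

end Morton

open Morton in
theorem morton_union_two_starshaped_general (d L Qstart Qend : ℕ)
    (hle : Qstart ≤ Qend) (hQend : Qend < 2 ^ (d * L)) :
    StarShaped (interior (⋃ Q ∈ Set.Icc Qstart Qend, mortonOmega d L Q)) ∨
    ∃ c, Qstart ≤ c ∧ c < Qend ∧
      (⋃ Q ∈ Set.Icc Qstart Qend, mortonOmega d L Q) =
        (⋃ Q ∈ Set.Icc Qstart c, mortonOmega d L Q) ∪
        (⋃ Q ∈ Set.Icc (c + 1) Qend, mortonOmega d L Q) ∧
      StarShaped (interior (⋃ Q ∈ Set.Icc Qstart c, mortonOmega d L Q)) ∧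
      StarShaped (interior (⋃ Q ∈ Set.Icc (c + 1) Qend, mortonOmega d L Q)) := by
  obtain rfl | hlt := hle.eq_or_lt
  · refine .inl ⟨_, starShapedWrt_interior_Icc_of_coord_le le_rfl hQend fun Q hQ r => ?_⟩
    rw [le_antisymm hQ.2 hQ.1]
  obtain ⟨k, hk⟩ := Nat.exists_div_two_pow_add_one_eq hlt
  have hpos := Nat.two_pow_pos k
  have hc : 2 ^ k * (Qstart / 2 ^ k) + (2 ^ k - 1) + 1 = 2 ^ k * (Qend / 2 ^ k) := by
    rw [← hk, mul_add_one]; omega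
  have hcQend : 2 ^ k * (Qend / 2 ^ k) ≤ Qend := Nat.mul_div_le Qend (2 ^ k)
  have hQstart : Qstart < 2 ^ k * (Qstart / 2 ^ k) + 2 ^ k :=
    mul_add_one (2 ^ k) _ ▸ Nat.lt_mul_div_succ Qstart hpos
  refine .inr ⟨2 ^ k * (Qstart / 2 ^ k) + (2 ^ k - 1), by omega, by omega, ?_,
    ⟨_, starShapedWrt_interior_Icc_two_pow_mul_add rfl (by omega)⟩, ?_⟩
  · rw [Icc_add_one_left_eq_Ioc, ← biUnion_union, Icc_union_Ioc_eq_Icc (by omega) (by omega)]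
  · rw [hc]
    exact ⟨_, starShapedWrt_interior_Icc_two_pow_mul rfl hQend⟩

/-- The region `Y = ⋃_{Q=Qstart}^{Qend} Ω(Q)` either has star-shaped interior, or it is
the union of two pieces `Y₁ = ⋃_{Q=Qstart}^{c} Ω(Q)` and `Y₂ = ⋃_{Q=c+1}^{Qend} Ω(Q)`
whose interiors are star-shaped. -/
theorem morton_union_two_starshaped (d L Qstart Qend : ℕ) (hd : 1 ≤ d)
    (hle : Qstart ≤ Qend) (hQend : Qend < 2 ^ (d * L)) :
    StarShaped (interior (⋃ Q ∈ Set.Icc Qstart Qend, mortonOmega d L Q)) ∨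
    ∃ c, Qstart ≤ c ∧ c < Qend ∧
      (⋃ Q ∈ Set.Icc Qstart Qend, mortonOmega d L Q) =
        (⋃ Q ∈ Set.Icc Qstart c, mortonOmega d L Q) ∪
        (⋃ Q ∈ Set.Icc (c + 1) Qend, mortonOmega d L Q) ∧
      StarShaped (interior (⋃ Q ∈ Set.Icc Qstart c, mortonOmega d L Q)) ∧
      StarShaped (interior (⋃ Q ∈ Set.Icc (c + 1) Qend, mortonOmega d L Q)) :=
  morton_union_two_starshaped_general d L Qstart Qend hle hQend
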